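/- Closedness of Chern forms: if θ is a matrix of 1-forms and Θ = dθ + θ∧θ, then every homogeneous component of det(1 + c·Θ) is a closed form, for any scalar c ∈ ℂ. -/

import Mathlib

/-!
Even forms commute with everything and `d` is an ordinary derivation on them, so
`A = 1 + c • Θ` is a matrix over a commutative ring carrying a derivation, and Jacobi's formula
gives `d (det A) = tr (adj A · dA)`. The Bianchi identity `dΘ = Θθ - θΘ` turns this into
`dA = Aθ - θA`, and then `tr (adj A · (Aθ - θA)) = tr (adj A · A · θ) - tr (A · adj A · θ) = 0`,
because `adj A · A = A · adj A = det A · 1`. Finally `d` raises degrees by exactly one, so the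
homogeneous components of a closed form are closed.
-/

/-- Determinant (via the Leibniz formula with a fixed ordering of the factors)
of a square matrix over a possibly noncommutative ring; for matrices of even
differential forms, whose entries commute, this is "the" determinant. -/
def ndet {n : ℕ} {Ω : Type*} [Ring Ω] (M : Matrix (Fin n) (Fin n) Ω) : Ω :=
  ∑ σ : Equiv.Perm (Fin n),
    ((Equiv.Perm.sign σ : ℤ)) • (List.ofFn fun i => M (σ i) i).prod

open Matrix Finset

namespace Matrix

variable {n R M : Type*} [Fintype n]

theorem trace_mul_comm_of_commute {Ω : Type*} [NonUnitalNonAssocSemiring Ω] (X Y : Matrix n n Ω)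
    (h : ∀ i j, Commute (X i j) (Y j i)) :
    trace (X * Y) = trace (Y * X) := by
  simp only [trace, diag, mul_apply]
  rw [sum_comm]
  exact sum_congr rfl fun i _ => sum_congr rfl fun j _ => (h j i).eq

variable [DecidableEq n] [CommRing R]

theorem adjugate_apply_eq_det_updateCol (B : Matrix n n R) (p r : n) :
    B.adjugate p r = (B.updateCol p (Pi.single r 1)).det := by
  rw [← cramer_apply, cramer_eq_adjugate_mulVec, mulVec_single_one]
  rfl

theorem sum_sign_smul_prod_erase_smul [AddCommGroup M] [Module R M] (B : Matrix n n R) (p : n)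
    (w : n → M) :
    ∑ σ : Equiv.Perm n, Equiv.Perm.sign σ • (∏ i ∈ univ.erase p, B (σ i) i) • w (σ p) =
      ∑ r, B.adjugate p r • w r := by
  have hcofactor : ∀ r, B.adjugate p r = ∑ σ : Equiv.Perm n,
      Equiv.Perm.sign σ • ((Pi.single r 1 : n → R) (σ p) * ∏ i ∈ univ.erase p, B (σ i) i) := by
    intro r
    rw [adjugate_apply_eq_det_updateCol, det_apply]
    refine sum_congr rfl fun σ _ => ?_
    rw [← mul_prod_erase univ _ (mem_univ p)]
    congr 2
    · simp
    · exact prod_congr rfl fun i hi => by simp [ne_of_mem_erase hi]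
  simp_rw [hcofactor, sum_smul]
  rw [sum_comm]
  refine sum_congr rfl fun σ _ => ?_
  rw [sum_eq_single (σ p) (fun r _ hr => by simp [Ne.symm hr]) (by simp), Pi.single_eq_same,
    one_mul, smul_assoc]

theorem trace_map_adjugate_mul_commutator {Ω : Type*} [Ring Ω] (f : R →+* Ω)
    (hf : ∀ x y, Commute (f x) y) (B : Matrix n n R) (θ : Matrix n n Ω) :
    trace (B.adjugate.map f * (B.map f * θ - θ * B.map f)) = 0 := by
  rw [mul_sub, trace_sub, ← mul_assoc, ← mul_assoc,
    trace_mul_comm_of_commute _ (B.map f) fun i j => (hf _ _).symm, ← mul_assoc,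
    ← Matrix.map_mul, ← Matrix.map_mul, adjugate_mul, mul_adjugate, sub_self]

end Matrix

namespace Derivation

variable {R A M : Type*} [CommSemiring R] [CommRing A] [AddCommGroup M] [Algebra R A]
  [Module A M] [Module R M] (D : Derivation R A M)

theorem leibniz_finset_prod {ι : Type*} [DecidableEq ι] (s : Finset ι) (f : ι → A) :
    D (∏ i ∈ s, f i) = ∑ i ∈ s, (∏ j ∈ s.erase i, f j) • D (f i) := by
  induction s using Finset.induction_on with
  | empty => simp
  | insert a s ha ih =>
    rw [prod_insert ha, leibniz, ih, sum_insert ha, erase_insert ha, smul_sum, add_comm]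
    congr 1
    refine sum_congr rfl fun i hi => ?_
    rw [erase_insert_of_ne (ne_of_mem_of_not_mem hi ha).symm,
      prod_insert (fun h => ha (mem_of_mem_erase h)), mul_smul]

theorem map_det {n : Type*} [Fintype n] [DecidableEq n] (B : Matrix n n A) :
    D B.det = ∑ p, ∑ r, B.adjugate p r • D (B r p) := by
  simp_rw [det_apply, map_sum, Units.smul_def, map_zsmul, leibniz_finset_prod, smul_sum]
  rw [sum_comm]
  refine sum_congr rfl fun p _ => ?_
  simpa [Units.smul_def] using B.sum_sign_smul_prod_erase_smul p (fun r => D (B r p))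

end Derivation

theorem ndet_map {n : ℕ} {R Ω : Type*} [CommRing R] [Ring Ω] (f : R →+* Ω)
    (A : Matrix (Fin n) (Fin n) R) : ndet (A.map f) = f A.det := by
  rw [ndet, det_apply, map_sum]
  refine sum_congr rfl fun σ _ => ?_
  rw [Units.smul_def, map_zsmul, ← List.prod_ofFn, map_list_prod, List.map_ofFn]
  rfl

section LeibnizCenter

variable {K Ω : Type*} [CommRing K] [Ring Ω] [Algebra K Ω] (d : Ω →ₗ[K] Ω) (hd : d 1 = 0)

/-- Stands in for the even forms: it contains every even homogeneous form, is commutative, and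
`d` restricts to a derivation on it. -/
def leibnizCenter : Subalgebra K Ω where
  carrier := {a | (∀ b, Commute a b) ∧ ∀ b, d (a * b) = d a * b + a * d b}
  mul_mem' {a a'} ha ha' := by
    refine ⟨fun b => (ha.1 b).mul_left (ha'.1 b), fun b => ?_⟩
    rw [mul_assoc, ha.2, ha'.2, ha.2, mul_add, ← mul_assoc a (d a'), (ha.1 (d a')).eq]
    noncomm_ring
  add_mem' {a a'} ha ha' := by
    refine ⟨fun b => (ha.1 b).add_left (ha'.1 b), fun b => ?_⟩
    rw [add_mul, map_add, map_add, ha.2, ha'.2]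
    noncomm_ring
  algebraMap_mem' r := by
    refine ⟨Algebra.commutes r, fun b => ?_⟩
    rw [Algebra.algebraMap_eq_smul_one, smul_mul_assoc, one_mul, map_smul, map_smul, hd]
    simp

instance : CommRing (leibnizCenter d hd) :=
  { (leibnizCenter d hd).toRing with mul_comm := fun a b => Subtype.ext (a.2.1 b) }

def leibnizCenter.derivation : Derivation K (leibnizCenter d hd) Ω where
  toLinearMap := d ∘ₗ (leibnizCenter d hd).val.toLinearMap
  map_one_eq_zero' := hd
  leibniz' a b := by
    change d (a * b) = a * d b + b * d a
    rw [a.2.2, add_comm, (b.2.1 _).eq]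

@[simp]
theorem leibnizCenter.derivation_apply (a : leibnizCenter d hd) :
    leibnizCenter.derivation d hd a = d a :=
  rfl

theorem leibnizCenter.d_det_eq_zero {n : Type*} [Fintype n] [DecidableEq n]
    (A : Matrix n n (leibnizCenter d hd)) (θ : Matrix n n Ω)
    (h : (A.map (↑)).map d = A.map (↑) * θ - θ * A.map (↑)) :
    d (A.det : Ω) = 0 :=
  calc d (A.det : Ω)
      = ∑ p, ∑ r, A.adjugate p r • leibnizCenter.derivation d hd (A r p) :=
        (leibnizCenter.derivation d hd).map_det A
    _ = trace (A.adjugate.map (↑) * (A.map (↑)).map d) := by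
        simp [trace, mul_apply, Subalgebra.smul_def]
    _ = 0 := h ▸ trace_map_adjugate_mul_commutator (leibnizCenter d hd).val.toRingHom
        (fun x y => x.2.1 y) A θ

end LeibnizCenter

section Curvature

variable {K Ω : Type*} [CommRing K] [Ring Ω] [Algebra K Ω] {n : Type*} [Fintype n]

theorem map_curvature_eq_commutator (𝒜 : ℕ → Submodule K Ω) (d : Ω →ₗ[K] Ω)
    (hLeib : ∀ (m : ℕ) (a b : Ω), a ∈ 𝒜 m → d (a * b) = d a * b + ((-1 : ℤ) ^ m) • (a * d b))
    (hd2 : ∀ a : Ω, d (d a) = 0) (θ : Matrix n n Ω) (hθ : ∀ i j, θ i j ∈ 𝒜 1) :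
    (θ.map d + θ * θ).map d = (θ.map d + θ * θ) * θ - θ * (θ.map d + θ * θ) := by
  have hsq : (θ * θ).map d = θ.map d * θ - θ * θ.map d := by
    ext i j
    simp [mul_apply, hLeib 1 _ _ (hθ _ _), sub_eq_add_neg, sum_add_distrib]
  have hdd : (θ.map d).map d = 0 := by
    ext i j
    simp [hd2]
  rw [Matrix.map_add _ (map_add d), hsq, hdd]
  noncomm_ring

theorem map_one_add_smul_eq_commutator [DecidableEq n] {d : Ω →ₗ[K] Ω} (hd : d 1 = 0)
    {Θ θ : Matrix n n Ω} (h : Θ.map d = Θ * θ - θ * Θ) (c : K) :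
    (1 + c • Θ).map d = (1 + c • Θ) * θ - θ * (1 + c • Θ) := by
  have h1 : (1 : Matrix n n Ω).map d = 0 := by
    ext i j
    by_cases hij : i = j <;> simp [one_apply, hij, hd]
  rw [Matrix.map_add _ (map_add d), Matrix.map_smul _ c (map_smul d c), h1, h, zero_add, smul_sub,
    add_mul, mul_add, one_mul, mul_one, smul_mul_assoc, mul_smul_comm]
  abel

end Curvature

section Graded

variable {K Ω : Type*} [CommRing K] [Ring Ω] [Algebra K Ω] (𝒜 : ℕ → Submodule K Ω)
  [GradedRing 𝒜] (d : Ω →ₗ[K] Ω)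

theorem d_one_eq_zero
    (hLeib : ∀ (m : ℕ) (a b : Ω), a ∈ 𝒜 m → d (a * b) = d a * b + ((-1 : ℤ) ^ m) • (a * d b)) :
    d 1 = 0 := by
  simpa using hLeib 0 1 1 (SetLike.one_mem_graded 𝒜)

theorem commute_of_mem_of_even
    (hcomm : ∀ (m k : ℕ) (a b : Ω), a ∈ 𝒜 m → b ∈ 𝒜 k → a * b = ((-1 : ℤ) ^ (m * k)) • (b * a))
    {m : ℕ} (hm : Even m) {a : Ω} (ha : a ∈ 𝒜 m) (b : Ω) : Commute a b := by
  induction b using DirectSum.Decomposition.inductionOn 𝒜 with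
  | zero => exact Commute.zero_right a
  | @homogeneous k b =>
    rw [Commute, SemiconjBy, hcomm m k a b ha b.2, (hm.mul_right k).neg_one_pow, one_smul]
  | add b b' hb hb' => exact hb.add_right hb'

theorem mem_leibnizCenter_of_mem_of_even
    (hLeib : ∀ (m : ℕ) (a b : Ω), a ∈ 𝒜 m → d (a * b) = d a * b + ((-1 : ℤ) ^ m) • (a * d b))
    (hcomm : ∀ (m k : ℕ) (a b : Ω), a ∈ 𝒜 m → b ∈ 𝒜 k → a * b = ((-1 : ℤ) ^ (m * k)) • (b * a))
    {m : ℕ} (hm : Even m) {a : Ω} (ha : a ∈ 𝒜 m) :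
    a ∈ leibnizCenter d (d_one_eq_zero 𝒜 d hLeib) :=
  ⟨commute_of_mem_of_even 𝒜 hcomm hm ha, fun b => by rw [hLeib m a b ha, hm.neg_one_pow, one_smul]⟩

theorem d_decompose_eq_decompose_d (hdeg : ∀ (m : ℕ) (a : Ω), a ∈ 𝒜 m → d a ∈ 𝒜 (m + 1))
    (x : Ω) (k : ℕ) :
    d (DirectSum.decompose 𝒜 x k) = DirectSum.decompose 𝒜 (d x) (k + 1) := by
  induction x using DirectSum.Decomposition.inductionOn 𝒜 with
  | zero => simp
  | @homogeneous i x =>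
    rw [DirectSum.decompose_coe, DirectSum.decompose_of_mem 𝒜 (hdeg i x x.2)]
    by_cases hik : i = k
    · subst hik
      simp
    · rw [DirectSum.of_eq_of_ne _ _ _ (Ne.symm hik), DirectSum.of_eq_of_ne _ _ _ (by omega)]
      simp
  | add x x' hx hx' => simp [hx, hx']

end Graded

/-- **Closedness of the Chern forms.**  Work in a graded-commutative
differential graded algebra `Ω` over `ℂ` (the smooth complex-valued
differential forms on a manifold `M`, with `𝒜 m` the `m`-forms and `d` the
exterior derivative).  Let `θ` be an `n × n` matrix of `1`-forms,
`Θ = dθ + θ ∧ θ` its curvature, and `c ∈ ℂ`.  Then every homogeneous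
component of `det (1 + c • Θ)` is a closed form. -/
theorem chern_forms_closed {n : ℕ} {Ω : Type*} [Ring Ω] [Algebra ℂ Ω]
    (𝒜 : ℕ → Submodule ℂ Ω) [GradedRing 𝒜]
    (d : Ω →ₗ[ℂ] Ω)
    (hLeib : ∀ (m : ℕ) (a b : Ω), a ∈ 𝒜 m →
      d (a * b) = d a * b + ((-1 : ℤ) ^ m) • (a * d b))
    (hd2 : ∀ a : Ω, d (d a) = 0)
    (hdeg : ∀ (m : ℕ) (a : Ω), a ∈ 𝒜 m → d a ∈ 𝒜 (m + 1))
    (hcomm : ∀ (m k : ℕ) (a b : Ω), a ∈ 𝒜 m → b ∈ 𝒜 k →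
      a * b = ((-1 : ℤ) ^ (m * k)) • (b * a))
    (θ : Matrix (Fin n) (Fin n) Ω)
    (hθ : ∀ i j, θ i j ∈ 𝒜 1)
    (Θ : Matrix (Fin n) (Fin n) Ω)
    (hΘ : Θ = θ.map d + θ * θ)
    (c : ℂ) :
    ∀ k : ℕ,
      d ((DirectSum.decompose 𝒜
        (ndet ((1 : Matrix (Fin n) (Fin n) Ω) + c • Θ)) k : 𝒜 k) : Ω) = 0 := by
  intro k
  have hd1 := d_one_eq_zero 𝒜 d hLeib
  have hΘ2 : ∀ i j, Θ i j ∈ 𝒜 2 := by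
    intro i j
    rw [hΘ, Matrix.add_apply, map_apply, mul_apply]
    exact add_mem (hdeg 1 _ (hθ i j)) (sum_mem fun l _ => SetLike.mul_mem_graded (hθ i l) (hθ l j))
  have hM : ∀ i j, (1 + c • Θ) i j ∈ leibnizCenter d hd1 := fun i j =>
    add_mem (by rw [one_apply]; split_ifs; exacts [one_mem _, zero_mem _]) <|
      Subalgebra.smul_mem _
        (mem_leibnizCenter_of_mem_of_even 𝒜 d hLeib hcomm even_two (hΘ2 i j)) c
  let A : Matrix (Fin n) (Fin n) (leibnizCenter d hd1) := of fun i j => ⟨_, hM i j⟩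
  have hdA : (A.map (↑)).map d = A.map (↑) * θ - θ * A.map (↑) :=
    map_one_add_smul_eq_commutator hd1 (hΘ ▸ map_curvature_eq_commutator 𝒜 d hLeib hd2 θ hθ) c
  rw [show 1 + c • Θ = A.map (leibnizCenter d hd1).val.toRingHom from rfl, ndet_map,
    d_decompose_eq_decompose_d 𝒜 d hdeg]
  change (DirectSum.decompose 𝒜 (d (A.det : Ω)) (k + 1) : Ω) = 0
  rw [leibnizCenter.d_det_eq_zero d hd1 A θ hdA, DirectSum.decompose_zero]
  rfl
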